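/- For K, T ∈ 𝒮ₙ and λ ∈ (0,1), one has ((1−λ)K + λT)^c = (1−λ)K^c + λT^c, where + denotes Minkowski addition and scalar multiples are dilations. -/

import Mathlib

open Pointwise

def IsBallBody {n : ℕ} (K : Set (EuclideanSpace ℝ (Fin n))) : Prop :=
  K.Nonempty ∧ ∃ C : Set (EuclideanSpace ℝ (Fin n)), C.Nonempty ∧
    K = ⋂ x ∈ C, Metric.closedBall x 1

def cDual {n : ℕ} (K : Set (EuclideanSpace ℝ (Fin n))) : Set (EuclideanSpace ℝ (Fin n)) :=
  ⋂ x ∈ K, Metric.closedBall x 1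

open Metric RealInnerProductSpace

lemma mem_cDual' {n : ℕ} {K : Set (EuclideanSpace ℝ (Fin n))} {y : EuclideanSpace ℝ (Fin n)} :
    y ∈ cDual K ↔ ∀ x ∈ K, dist y x ≤ 1 := by
  simp [cDual]

section Generic

variable {E : Type*} [NormedAddCommGroup E] [InnerProductSpace ℝ E]

lemma inner_expand' (v u c' : E) (t s : ℝ) :
    ⟪t • v - s • u - c', t • v - s • u - c'⟫ =
      t ^ 2 * ⟪v, v⟫ - 2 * t * s * ⟪u, v⟫ + s ^ 2 * ⟪u, u⟫
        - 2 * t * ⟪v, c'⟫ + 2 * s * ⟪u, c'⟫ + ⟪c', c'⟫ := by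
  simp only [inner_sub_left, inner_sub_right, real_inner_smul_left, real_inner_smul_right]
  rw [real_inner_comm v u, real_inner_comm c' v, real_inner_comm c' u]
  ring

lemma inner_sub_expand' (u v : E) :
    ⟪u - v, u - v⟫ = ⟪u, u⟫ - 2 * ⟪u, v⟫ + ⟪v, v⟫ := by
  simp only [inner_sub_left, inner_sub_right]
  rw [real_inner_comm v u]
  ring

lemma inner_comb1' (u x t : E) (a b : ℝ) :
    ⟪u, a • (x + u) + b • (t + u)⟫
      = (a * ⟪u, x⟫ + b * ⟪u, t⟫) + (a + b) * ⟪u, u⟫ := by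
  simp only [inner_add_right, real_inner_smul_right]
  ring

lemma inner_comb2' (u x t : E) (a b : ℝ) :
    ⟪u, a • x + b • t⟫ = a * ⟪u, x⟫ + b * ⟪u, t⟫ := by
  simp only [inner_add_right, real_inner_smul_right]

set_option maxHeartbeats 1000000 in
lemma exists_support_gen [ProperSpace E] {K C : Set E} (hne : K.Nonempty) {c₀ : E}
    (hc₀ : c₀ ∈ C) (hKC : K = ⋂ x ∈ C, Metric.closedBall x 1)
    (u : E) (hu : ‖u‖ = 1) :
    ∃ x₀ ∈ K, (∀ x ∈ K, ⟪u, x₀⟫ ≤ ⟪u, x⟫) ∧ ∀ y ∈ K, dist (x₀ + u) y ≤ 1 := by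
  have hsub : ∀ c ∈ C, K ⊆ closedBall c 1 := by
    intro c hc x hx
    rw [hKC] at hx
    exact Set.mem_iInter₂.1 hx c hc
  have hclosed : IsClosed K := by
    rw [hKC]; exact isClosed_biInter fun c _ => isClosed_closedBall
  have hbdd : Bornology.IsBounded K :=
    (isBounded_closedBall (x := c₀) (r := 1)).subset (hsub c₀ hc₀)
  have hcomp : IsCompact K := Metric.isCompact_of_isClosed_isBounded hclosed hbdd
  have hcont : ContinuousOn (fun x => ⟪u, x⟫) K :=
    (continuous_const.inner continuous_id).continuousOn
  obtain ⟨x₀, hx₀K, hmin⟩ := hcomp.exists_isMinOn hne hcont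
  refine ⟨x₀, hx₀K, fun x hx => hmin hx, ?_⟩
  intro y hy
  by_contra hgt
  push_neg at hgt
  obtain ⟨v, hv⟩ : ∃ v : E, v = y - x₀ := ⟨_, rfl⟩
  have hA : (0:ℝ) ≤ ⟪v, v⟫ := real_inner_self_nonneg
  have huu : ⟪u, u⟫ = (1:ℝ) := by
    rw [real_inner_self_eq_norm_sq, hu]; norm_num
  have hBu0 : (0:ℝ) ≤ ⟪u, v⟫ := by
    have h1 : ⟪u, x₀⟫ ≤ ⟪u, y⟫ := hmin hy
    have h2 : ⟪u, v⟫ = ⟪u, y⟫ - ⟪u, x₀⟫ := by rw [hv, inner_sub_right]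
    linarith
  have hnv : ‖v‖ ≤ 2 := by
    have h1 : dist y c₀ ≤ 1 := mem_closedBall.1 (hsub c₀ hc₀ hy)
    have h2 : dist x₀ c₀ ≤ 1 := mem_closedBall.1 (hsub c₀ hc₀ hx₀K)
    have h3 : dist y x₀ ≤ dist y c₀ + dist c₀ x₀ := dist_triangle _ _ _
    rw [dist_comm c₀ x₀] at h3
    calc ‖v‖ = dist y x₀ := by rw [hv, dist_eq_norm]
    _ ≤ 2 := by linarith
  have hA4 : ⟪v, v⟫ ≤ (4:ℝ) := by
    rw [real_inner_self_eq_norm_sq]; nlinarith [norm_nonneg v]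
  have hBu2 : ⟪u, v⟫ ≤ (2:ℝ) := by
    have h1 := real_inner_le_norm u v
    rw [hu] at h1; linarith
  obtain ⟨δ, hδdef⟩ : ∃ δ : ℝ, δ = ⟪v, v⟫ / 2 - ⟪u, v⟫ := ⟨_, rfl⟩
  have hδ : 0 < δ := by
    have h1 : (1:ℝ) < ‖x₀ + u - y‖ := by
      rw [← dist_eq_norm]; exact hgt
    have h2 : x₀ + u - y = u - v := by rw [hv]; abel
    have h4 : (1:ℝ) < ⟪u - v, u - v⟫ := by
      rw [real_inner_self_eq_norm_sq, ← h2]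
      nlinarith
    rw [inner_sub_expand' u v, huu] at h4
    rw [hδdef]; linarith
  obtain ⟨t, htdef⟩ : ∃ t : ℝ, t = min 1 (δ / 16) := ⟨_, rfl⟩
  have ht0 : 0 < t := htdef ▸ lt_min one_pos (div_pos hδ (by norm_num))
  have ht1 : t ≤ 1 := htdef ▸ min_le_left _ _
  have ht16 : t ≤ δ / 16 := htdef ▸ min_le_right _ _
  obtain ⟨s, hsdef⟩ : ∃ s : ℝ, s = t * (⟪u, v⟫ + ⟪v, v⟫ / 2) / 2 := ⟨_, rfl⟩
  have hs0 : 0 ≤ s := by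
    rw [hsdef]
    apply div_nonneg _ (by norm_num)
    apply mul_nonneg ht0.le
    linarith
  have hs2t : s ≤ 2 * t := by
    rw [hsdef]; nlinarith
  obtain ⟨w, hw⟩ : ∃ w : E, w = x₀ + (t • v - s • u) := ⟨_, rfl⟩
  have hwK : w ∈ K := by
    rw [hKC, Set.mem_iInter₂]
    intro c hc
    have h1 : dist x₀ c ≤ 1 := mem_closedBall.1 (hsub c hc hx₀K)
    have h2 : dist y c ≤ 1 := mem_closedBall.1 (hsub c hc hy)
    obtain ⟨c', hc'⟩ : ∃ c' : E, c' = c - x₀ := ⟨_, rfl⟩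
    have hc1 : ‖c'‖ ≤ 1 := by
      rw [hc', ← dist_eq_norm, dist_comm]; exact h1
    have hR0 : (0:ℝ) ≤ ⟪c', c'⟫ := real_inner_self_nonneg
    have hR1 : ⟪c', c'⟫ ≤ (1:ℝ) := by
      rw [real_inner_self_eq_norm_sq]
      nlinarith [norm_nonneg c']
    have hP : ⟪v, v⟫ - 2 * ⟪v, c'⟫ + ⟪c', c'⟫ ≤ 1 := by
      have hvc : ‖v - c'‖ ≤ 1 := by
        have h3 : v - c' = y - c := by rw [hv, hc']; abel
        rw [h3, ← dist_eq_norm]; exact h2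
      have h4 : ⟪v - c', v - c'⟫ ≤ 1 := by
        rw [real_inner_self_eq_norm_sq]
        nlinarith [norm_nonneg (v - c')]
      rw [inner_sub_expand' v c'] at h4
      linarith
    have hQ : ⟪u, c'⟫ ≤ 1 := by
      have h5 := real_inner_le_norm u c'
      rw [hu] at h5; nlinarith
    rw [mem_closedBall, dist_eq_norm]
    have hwc : w - c = t • v - s • u - c' := by rw [hw, hc']; abel
    have hsq : ⟪w - c, w - c⟫ ≤ 1 := by
      rw [hwc, inner_expand' v u c' t s, huu]
      -- auxiliary product facts, then linear arithmetic
      have f1 : t * (⟪v, v⟫ - 2 * ⟪v, c'⟫ + ⟪c', c'⟫) ≤ t * 1 :=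
        mul_le_mul_of_nonneg_left hP ht0.le
      have f2 : s * ⟪u, c'⟫ ≤ s * 1 := mul_le_mul_of_nonneg_left hQ hs0
      have f3 : 0 ≤ t * s * ⟪u, v⟫ := mul_nonneg (mul_nonneg ht0.le hs0) hBu0
      have f4 : t ^ 2 * ⟪v, v⟫ ≤ t ^ 2 * 4 :=
        mul_le_mul_of_nonneg_left hA4 (sq_nonneg t)
      have f5 : s * s ≤ (2 * t) * (2 * t) :=
        mul_le_mul hs2t hs2t hs0 (by linarith)
      have f6 : t * t ≤ t * (δ / 16) := mul_le_mul_of_nonneg_left ht16 ht0.le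
      have f7 : t * δ = t * ⟪v, v⟫ / 2 - t * ⟪u, v⟫ := by rw [hδdef]; ring
      have f8 : 0 ≤ (1 - ⟪c', c'⟫) * (1 - t) :=
        mul_nonneg (by linarith) (by linarith)
      have h2s : 2 * s = t * ⟪u, v⟫ + t * ⟪v, v⟫ / 2 := by rw [hsdef]; ring
      have f9 : (0:ℝ) ≤ t * t := mul_nonneg ht0.le ht0.le
      linarith [f1, f2, f3, f4, f5, f6, f7, f8, f9, h2s]
    have h6 := real_inner_self_eq_norm_sq (w - c)
    nlinarith [norm_nonneg (w - c)]
  have hcontr : ⟪u, w⟫ < ⟪u, x₀⟫ := by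
    have h7 : ⟪u, w⟫ = ⟪u, x₀⟫ + t * ⟪u, v⟫ - s := by
      rw [hw, inner_add_right, inner_sub_right, real_inner_smul_right,
        real_inner_smul_right, huu]
      ring
    have h8 : t * ⟪u, v⟫ - s = -(t * δ / 2) := by
      rw [hsdef, hδdef]; ring
    rw [h7]
    have h9 := mul_pos ht0 hδ
    linarith [h8, h9]
  exact absurd (hmin hwK) (not_le.2 hcontr)

end Generic

lemma exists_support' {n : ℕ} {K : Set (EuclideanSpace ℝ (Fin n))} (hK : IsBallBody K)
    (u : EuclideanSpace ℝ (Fin n)) (hu : ‖u‖ = 1) :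
    ∃ x₀ ∈ K, (∀ x ∈ K, ⟪u, x₀⟫ ≤ ⟪u, x⟫) ∧ x₀ + u ∈ cDual K := by
  obtain ⟨hne, C, ⟨c₀, hc₀⟩, hKC⟩ := hK
  obtain ⟨x₀, hx₀K, hmin, hdist⟩ := exists_support_gen hne hc₀ hKC u hu
  exact ⟨x₀, hx₀K, hmin, mem_cDual'.2 hdist⟩

lemma cDual_props {n : ℕ} {K : Set (EuclideanSpace ℝ (Fin n))} (hK : IsBallBody K) :
    (cDual K).Nonempty ∧ IsCompact (cDual K) ∧ Convex ℝ (cDual K) := by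
  obtain ⟨⟨x, hx⟩, C, ⟨c₀, hc₀⟩, hKC⟩ := hK
  have hKsub : K ⊆ closedBall c₀ 1 := by
    intro z hz; rw [hKC] at hz; exact Set.mem_iInter₂.1 hz c₀ hc₀
  refine ⟨⟨c₀, mem_cDual'.2 fun z hz => ?_⟩, ?_, ?_⟩
  · rw [dist_comm]; exact mem_closedBall.1 (hKsub hz)
  · have hclosed : IsClosed (cDual K) := isClosed_biInter fun z _ => isClosed_closedBall
    have hbdd : Bornology.IsBounded (cDual K) := by
      refine (isBounded_closedBall (x := x) (r := 1)).subset ?_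
      intro y hy
      exact mem_closedBall.1 (Set.mem_iInter₂.1 hy x hx)
    exact Metric.isCompact_of_isClosed_isBounded hclosed hbdd
  · exact convex_iInter₂ fun z _ => convex_closedBall z 1

theorem stmt8 {n : ℕ} (K T : Set (EuclideanSpace ℝ (Fin n)))
    (hK : IsBallBody K) (hT : IsBallBody T) (l : ℝ) (hl : l ∈ Set.Ioo (0:ℝ) 1) :
    cDual ((1 - l) • K + l • T) = (1 - l) • cDual K + l • cDual T := by
  obtain ⟨hl0, hl1⟩ := hl
  have h1l : (0:ℝ) < 1 - l := by linarith
  apply Set.Subset.antisymm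
  · -- hard direction
    intro y hy
    by_contra hyS
    obtain ⟨hKne, hKcomp, hKconv⟩ := cDual_props hK
    obtain ⟨hTne, hTcomp, hTconv⟩ := cDual_props hT
    have hScomp : IsCompact ((1 - l) • cDual K + l • cDual T) :=
      (hKcomp.smul (1 - l)).add (hTcomp.smul l)
    have hSconv : Convex ℝ ((1 - l) • cDual K + l • cDual T) :=
      (hKconv.smul (1 - l)).add (hTconv.smul l)
    obtain ⟨f, r, hfr, hry⟩ := geometric_hahn_banach_closed_point hSconv hScomp.isClosed hyS
    obtain ⟨v, hvdef⟩ : ∃ v, v = (InnerProductSpace.toDual ℝ (EuclideanSpace ℝ (Fin n))).symm f :=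
      ⟨_, rfl⟩
    have hfv : ∀ z, ⟪v, z⟫ = f z := fun z => hvdef ▸ InnerProductSpace.toDual_symm_apply
    have hvne : v ≠ 0 := by
      obtain ⟨a, ha⟩ := hKne
      obtain ⟨b, hb⟩ := hTne
      have hab : (1 - l) • a + l • b ∈ (1 - l) • cDual K + l • cDual T :=
        Set.add_mem_add (Set.smul_mem_smul_set ha) (Set.smul_mem_smul_set hb)
      intro h0
      have h1 := hfr _ hab
      have h2 : f ((1 - l) • a + l • b) = 0 := by
        rw [← hfv, h0, inner_zero_left]
      have h3 : f y = 0 := by rw [← hfv, h0, inner_zero_left]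
      rw [h2] at h1; rw [h3] at hry; linarith
    have hvpos : (0:ℝ) < ‖v‖ := norm_pos_iff.2 hvne
    obtain ⟨u, hudef⟩ : ∃ u : EuclideanSpace ℝ (Fin n), u = ‖v‖⁻¹ • v := ⟨_, rfl⟩
    have hu : ‖u‖ = 1 := by
      rw [hudef, norm_smul, norm_inv, norm_norm, inv_mul_cancel₀ hvpos.ne']
    obtain ⟨x₀, hx₀K, hx₀min, hx₀c⟩ := exists_support' ⟨hK.1, hK.2⟩ u hu
    obtain ⟨t₀, ht₀T, ht₀min, ht₀c⟩ := exists_support' ⟨hT.1, hT.2⟩ u hu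
    have hp : (1 - l) • (x₀ + u) + l • (t₀ + u) ∈ (1 - l) • cDual K + l • cDual T :=
      Set.add_mem_add (Set.smul_mem_smul_set hx₀c) (Set.smul_mem_smul_set ht₀c)
    have hlt : f ((1 - l) • (x₀ + u) + l • (t₀ + u)) < f y := lt_trans (hfr _ hp) hry
    have hsc : ∀ z, ⟪u, z⟫ = ‖v‖⁻¹ * ⟪v, z⟫ := fun z => by
      rw [hudef, real_inner_smul_left]
    have hlt' : ⟪u, (1 - l) • (x₀ + u) + l • (t₀ + u)⟫ < ⟪u, y⟫ := by
      have h1 : ⟪v, (1 - l) • (x₀ + u) + l • (t₀ + u)⟫ < ⟪v, y⟫ := by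
        rw [hfv, hfv]; exact hlt
      rw [hsc, hsc]
      exact mul_lt_mul_of_pos_left h1 (by positivity)
    have huu : ⟪u, u⟫ = (1:ℝ) := by
      rw [real_inner_self_eq_norm_sq, hu]; norm_num
    have hm : (1 - l) • x₀ + l • t₀ ∈ (1 - l) • K + l • T :=
      Set.add_mem_add (Set.smul_mem_smul_set hx₀K) (Set.smul_mem_smul_set ht₀T)
    have hdy : dist y ((1 - l) • x₀ + l • t₀) ≤ 1 := mem_cDual'.1 hy _ hm
    have hiy : ⟪u, y⟫ - ⟪u, (1 - l) • x₀ + l • t₀⟫ ≤ 1 := by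
      have h1 : ⟪u, y - ((1 - l) • x₀ + l • t₀)⟫ ≤ ‖u‖ * ‖y - ((1 - l) • x₀ + l • t₀)‖ :=
        real_inner_le_norm _ _
      rw [inner_sub_right, hu, one_mul, ← dist_eq_norm] at h1
      linarith
    have hexp : ⟪u, (1 - l) • (x₀ + u) + l • (t₀ + u)⟫
        = ⟪u, (1 - l) • x₀ + l • t₀⟫ + 1 := by
      rw [inner_comb1' u x₀ t₀ (1 - l) l, inner_comb2' u x₀ t₀ (1 - l) l, huu]
      ring
    rw [hexp] at hlt'
    linarith
  · -- easy direction
    intro z hz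
    obtain ⟨a', ha', b', hb', hz'⟩ := Set.mem_add.1 hz
    obtain ⟨a, ha, rfl⟩ := Set.mem_smul_set.1 ha'
    obtain ⟨b, hb, rfl⟩ := Set.mem_smul_set.1 hb'
    rw [mem_cDual']
    intro m hm
    obtain ⟨x', hx', t', ht', hm'⟩ := Set.mem_add.1 hm
    obtain ⟨x, hx, rfl⟩ := Set.mem_smul_set.1 hx'
    obtain ⟨t, ht, rfl⟩ := Set.mem_smul_set.1 ht'
    have hax : dist a x ≤ 1 := mem_cDual'.1 ha x hx
    have hbt : dist b t ≤ 1 := mem_cDual'.1 hb t ht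
    rw [← hz', ← hm', dist_eq_norm]
    have hid : (1 - l) • a + l • b - ((1 - l) • x + l • t)
        = (1 - l) • (a - x) + l • (b - t) := by
      rw [smul_sub, smul_sub]; abel
    rw [hid]
    calc ‖(1 - l) • (a - x) + l • (b - t)‖
        ≤ ‖(1 - l) • (a - x)‖ + ‖l • (b - t)‖ := norm_add_le _ _
      _ = (1 - l) * ‖a - x‖ + l * ‖b - t‖ := by
          rw [norm_smul, norm_smul, Real.norm_eq_abs, Real.norm_eq_abs,
            abs_of_pos h1l, abs_of_pos hl0]
      _ ≤ (1 - l) * 1 + l * 1 := by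
          have h1 : ‖a - x‖ ≤ 1 := by rw [← dist_eq_norm]; exact hax
          have h2 : ‖b - t‖ ≤ 1 := by rw [← dist_eq_norm]; exact hbt
          have := h1l.le
          have := hl0.le
          nlinarith
      _ = 1 := by ring
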